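/- Suppose φ : ℝ^{n-1} → ℝ is continuous, nonnegative, bounded, K > 0 is a constant, and c₁ ≥ 0 is a constant such that K φ(x')^{n/(n-2)} = ∫_{ℝ^n_+} P(y, x') (Pφ(y))^{(n+2)/(n-2)} dy + c₁ holds for all x' ∈ ℝ^{n-1}, where Pφ is the Poisson extension of φ and the integral is finite. Then c₁ = 0. -/

import Mathlib

/-!
If `c₁ > 0`, the equation and the nonnegativity of its integral term give
`φ ≥ (c₁ / K)^{(n-2)/n} > 0` everywhere. The Poisson kernel has the same positive mass on
every horizontal slice `t = const`, so averaging against it gives `Pφ ≥ L > 0` on the whole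
half space, and the integrand of the equation dominates `L^{(n+2)/(n-2)} P(·, x')`. For the
same reason `P(·, x')` is not integrable over `ℝ^n_+`, since the slices fill a set of infinite
measure in `t`.
-/

open MeasureTheory

/-- The volume of the unit ball in `ℝ^n`. -/
noncomputable def ballVol (n : ℕ) : ℝ :=
  (volume (Metric.ball (0 : EuclideanSpace ℝ (Fin n)) 1)).toReal

/-- The Poisson kernel of the upper half space `ℝ^{m+1}_+`. -/
noncomputable def poissonKernelHalf (m : ℕ) (y' x' : EuclideanSpace ℝ (Fin m)) (t : ℝ) : ℝ :=
  (2 / (((m : ℝ) + 1) * ballVol (m + 1))) * t /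
    (dist x' y' ^ 2 + t ^ 2) ^ (((m : ℝ) + 1) / 2)

/-- The Poisson extension of `φ : ℝ^m → ℝ` to the upper half space, at `(y', t)`. -/
noncomputable def poissonExtHalf (m : ℕ) (φ : EuclideanSpace ℝ (Fin m) → ℝ)
    (y' : EuclideanSpace ℝ (Fin m)) (t : ℝ) : ℝ :=
  ∫ x', poissonKernelHalf m x' y' t * φ x'

open Real

section PoissonKernelHalf

variable {m : ℕ}

lemma ballVol_pos (n : ℕ) : 0 < ballVol n :=
  ENNReal.toReal_pos (Metric.measure_ball_pos _ _ one_pos).ne' measure_ball_lt_top.ne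

lemma poissonKernelHalf_nonneg (y' x' : EuclideanSpace ℝ (Fin m)) {t : ℝ} (ht : 0 ≤ t) :
    0 ≤ poissonKernelHalf m y' x' t := by
  have := ballVol_pos (m + 1)
  unfold poissonKernelHalf
  positivity

lemma poissonKernelHalf_zero_one (u : EuclideanSpace ℝ (Fin m)) :
    poissonKernelHalf m u 0 1 =
      2 / (((m : ℝ) + 1) * ballVol (m + 1)) * (1 + ‖u‖ ^ 2) ^ (-((m : ℝ) + 1) / 2) := by
  rw [poissonKernelHalf, dist_zero_left, neg_div, rpow_neg (by positivity), one_pow,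
    mul_one, add_comm (‖u‖ ^ 2), div_eq_mul_inv]

lemma poissonKernelHalf_add_smul (x' u : EuclideanSpace ℝ (Fin m)) {t : ℝ} (ht : 0 < t) :
    poissonKernelHalf m (x' + t • u) x' t = (t ^ m)⁻¹ * poissonKernelHalf m u 0 1 := by
  have hden : dist x' (x' + t • u) ^ 2 + t ^ 2 = t ^ 2 * (‖u‖ ^ 2 + 1) := by
    rw [dist_self_add_right, norm_smul, norm_of_nonneg ht.le]
    ring
  have hpow : (t ^ 2 * (‖u‖ ^ 2 + 1)) ^ (((m : ℝ) + 1) / 2) =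
      t ^ (m + 1) * (‖u‖ ^ 2 + 1) ^ (((m : ℝ) + 1) / 2) := by
    rw [mul_rpow (by positivity) (by positivity), ← rpow_natCast t 2, ← rpow_mul ht.le,
      ← rpow_natCast t (m + 1)]
    push_cast
    rw [mul_div_cancel₀ _ two_ne_zero]
  rw [poissonKernelHalf, poissonKernelHalf, hden, hpow, dist_zero_left, one_pow, pow_succ]
  field_simp

lemma integrable_poissonKernelHalf_zero_one :
    Integrable (fun u : EuclideanSpace ℝ (Fin m) => poissonKernelHalf m u 0 1) := by
  simp only [poissonKernelHalf_zero_one]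
  refine (integrable_rpow_neg_one_add_norm_sq ?_).const_mul _
  rw [finrank_euclideanSpace_fin]
  linarith

lemma integrable_poissonKernelHalf (x' : EuclideanSpace ℝ (Fin m)) {t : ℝ} (ht : 0 < t) :
    Integrable (fun y' => poissonKernelHalf m y' x' t) := by
  have hscaled : Integrable (fun u => poissonKernelHalf m (x' + t • u) x' t) := by
    simp only [poissonKernelHalf_add_smul x' _ ht]
    exact integrable_poissonKernelHalf_zero_one.const_mul _
  have := (integrable_comp_smul_iff volume (fun v => poissonKernelHalf m (x' + v) x' t)
    ht.ne').1 hscaled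
  simpa using this.comp_add_left (-x')

/-- The mass of the Poisson kernel on a horizontal slice (in fact `1`). -/
noncomputable def poissonMass (m : ℕ) : ℝ :=
  ∫ u : EuclideanSpace ℝ (Fin m), poissonKernelHalf m u 0 1

lemma integral_poissonKernelHalf (x' : EuclideanSpace ℝ (Fin m)) {t : ℝ} (ht : 0 < t) :
    ∫ y', poissonKernelHalf m y' x' t = poissonMass m := by
  have hscale := Measure.integral_comp_smul volume
    (fun v => poissonKernelHalf m (x' + v) x' t) t
  simp only [poissonKernelHalf_add_smul x' _ ht, integral_const_mul,
    integral_add_left_eq_self (fun v => poissonKernelHalf m v x' t), finrank_euclideanSpace_fin,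
    abs_of_pos (inv_pos.2 (pow_pos ht m)), smul_eq_mul] at hscale
  exact (mul_left_cancel₀ (by positivity) hscale).symm

lemma poissonMass_pos : 0 < poissonMass m := by
  have hpos : ∀ u : EuclideanSpace ℝ (Fin m), 0 < poissonKernelHalf m u 0 1 := fun u => by
    have := ballVol_pos (m + 1)
    rw [poissonKernelHalf_zero_one]
    positivity
  rw [poissonMass, integral_pos_iff_support_of_nonneg (fun u => (hpos u).le)
    integrable_poissonKernelHalf_zero_one, Function.support_eq_univ fun u => (hpos u).ne']
  exact isOpen_univ.measure_pos volume Set.univ_nonempty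

lemma continuousOn_poissonKernelHalf (x' : EuclideanSpace ℝ (Fin m)) :
    ContinuousOn (fun y : EuclideanSpace ℝ (Fin m) × ℝ => poissonKernelHalf m y.1 x' y.2)
      {y | 0 < y.2} := by
  refine ContinuousOn.div (by fun_prop) (Continuous.continuousOn ?_) fun y hy => ?_
  · exact (((continuous_const.dist continuous_fst).pow 2).add
      (continuous_snd.pow 2)).rpow_const fun y => Or.inr (by positivity)
  · have : 0 < y.2 := hy
    positivity

end PoissonKernelHalf

section PoissonExtHalf

variable {m : ℕ} {φ : EuclideanSpace ℝ (Fin m) → ℝ}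

lemma poissonExtHalf_nonneg (hφ : ∀ x', 0 ≤ φ x') (y' : EuclideanSpace ℝ (Fin m)) {t : ℝ}
    (ht : 0 ≤ t) : 0 ≤ poissonExtHalf m φ y' t :=
  integral_nonneg fun x' => mul_nonneg (poissonKernelHalf_nonneg x' y' ht) (hφ x')

lemma mul_poissonMass_le_poissonExtHalf {δ b : ℝ} (hφ : AEStronglyMeasurable φ)
    (hδ : ∀ x', δ ≤ φ x') (hb : ∀ x', φ x' ≤ b) (y' : EuclideanSpace ℝ (Fin m)) {t : ℝ}
    (ht : 0 < t) : δ * poissonMass m ≤ poissonExtHalf m φ y' t := by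
  have hk := integrable_poissonKernelHalf y' ht
  have hkφ : Integrable fun x' => poissonKernelHalf m x' y' t * φ x' := by
    simpa only [mul_comm] using hk.bdd_mul hφ
      (ae_of_all _ fun x' => (norm_eq_abs (φ x')).trans_le (abs_le_max_abs_abs (hδ x') (hb x')))
  calc δ * poissonMass m = ∫ x', poissonKernelHalf m x' y' t * δ := by
        rw [integral_mul_const, integral_poissonKernelHalf y' ht, mul_comm]
    _ ≤ poissonExtHalf m φ y' t :=
        integral_mono (hk.mul_const δ) hkφ fun x' =>
          mul_le_mul_of_nonneg_left (hδ x') (poissonKernelHalf_nonneg x' y' ht.le)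

end PoissonExtHalf

section HalfSpace

variable {m : ℕ}

lemma not_integrableOn_poissonKernelHalf (x' : EuclideanSpace ℝ (Fin m)) :
    ¬ IntegrableOn (fun y : EuclideanSpace ℝ (Fin m) × ℝ => poissonKernelHalf m y.1 x' y.2)
      {y | 0 < y.2} := by
  intro h
  have hS : {y : EuclideanSpace ℝ (Fin m) × ℝ | 0 < y.2} = Set.univ ×ˢ Set.Ioi 0 := by
    ext; simp
  rw [IntegrableOn, hS, Measure.volume_eq_prod, ← Measure.prod_restrict,
    Measure.restrict_univ] at h
  have hslices := ((integrable_prod_iff' h.aestronglyMeasurable).1 h).2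
  have hconst : Integrable (fun _ : ℝ => poissonMass m) (volume.restrict (Set.Ioi 0)) := by
    refine hslices.congr ((ae_restrict_iff' measurableSet_Ioi).2 (ae_of_all _ fun t ht => ?_))
    simp_rw [norm_of_nonneg (poissonKernelHalf_nonneg _ x' (le_of_lt ht))]
    exact integral_poissonKernelHalf x' ht
  rcases integrable_const_iff.1 hconst with h0 | hfin
  · exact poissonMass_pos.ne' h0
  · simp [isFiniteMeasure_restrict, Real.volume_Ioi] at hfin

lemma not_integrableOn_poissonKernelHalf_mul_rpow {f : EuclideanSpace ℝ (Fin m) × ℝ → ℝ}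
    {L p : ℝ} (hL : 0 < L) (hp : 0 ≤ p)
    (hf : ∀ y ∈ {y : EuclideanSpace ℝ (Fin m) × ℝ | 0 < y.2}, L ≤ f y)
    (x' : EuclideanSpace ℝ (Fin m)) :
    ¬ IntegrableOn (fun y => poissonKernelHalf m y.1 x' y.2 * f y ^ p) {y | 0 < y.2} := by
  intro h
  have hS : MeasurableSet {y : EuclideanSpace ℝ (Fin m) × ℝ | 0 < y.2} :=
    measurableSet_lt measurable_const measurable_snd
  refine not_integrableOn_poissonKernelHalf x'
    ((integrable_const_mul_iff (rpow_pos_of_pos hL p).ne'.isUnit _).1 ?_)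
  refine h.mono'
    ((continuousOn_const.mul (continuousOn_poissonKernelHalf x')).aestronglyMeasurable hS)
    ((ae_restrict_iff' hS).2 (ae_of_all _ fun y hy => ?_))
  have hk := poissonKernelHalf_nonneg y.1 x' (le_of_lt hy)
  rw [norm_of_nonneg (by positivity), mul_comm]
  exact mul_le_mul_of_nonneg_left (rpow_le_rpow hL.le (hf y hy) hp) hk

end HalfSpace

/-- if `φ ≥ 0` is continuous and bounded on `ℝ^{n-1}`, `K > 0` and `c₁ ≥ 0`
are constants, and `K φ(x')^{n/(n-2)} = ∫_{ℝ^n_+} P(y,x') (Pφ(y))^{(n+2)/(n-2)} dy + c₁`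
for all `x'` (with the integral finite), then `c₁ = 0`.  Here `n = m + 1 ≥ 3`, so
`n/(n-2) = (m+1)/(m-1)` and `(n+2)/(n-2) = (m+3)/(m-1)`. -/
theorem stmt12 (m : ℕ) (hm : 2 ≤ m) (φ : EuclideanSpace ℝ (Fin m) → ℝ) (b : ℝ)
    (hcont : Continuous φ) (hnonneg : ∀ x', 0 ≤ φ x') (hbdd : ∀ x', φ x' ≤ b)
    (K c₁ : ℝ) (hK : 0 < K) (hc₁ : 0 ≤ c₁)
    (hint : ∀ x' : EuclideanSpace ℝ (Fin m),
      IntegrableOn (fun y : EuclideanSpace ℝ (Fin m) × ℝ =>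
          poissonKernelHalf m y.1 x' y.2 *
            poissonExtHalf m φ y.1 y.2 ^ (((m : ℝ) + 3) / ((m : ℝ) - 1)))
        {y : EuclideanSpace ℝ (Fin m) × ℝ | 0 < y.2})
    (heq : ∀ x' : EuclideanSpace ℝ (Fin m),
      K * φ x' ^ (((m : ℝ) + 1) / ((m : ℝ) - 1)) =
        (∫ y in {y : EuclideanSpace ℝ (Fin m) × ℝ | 0 < y.2},
          poissonKernelHalf m y.1 x' y.2 *
            poissonExtHalf m φ y.1 y.2 ^ (((m : ℝ) + 3) / ((m : ℝ) - 1))) + c₁) :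
    c₁ = 0 := by
  by_contra hne
  have hc : 0 < c₁ := hc₁.lt_of_ne' hne
  have hm1 : (0 : ℝ) < m - 1 := by
    have : (2 : ℝ) ≤ m := by exact_mod_cast hm
    linarith
  have hq : 0 < ((m : ℝ) + 1) / ((m : ℝ) - 1) := by positivity
  set δ := (c₁ / K) ^ (((m : ℝ) + 1) / ((m : ℝ) - 1))⁻¹ with hδ
  have hφ_ge : ∀ x', δ ≤ φ x' := fun x' => by
    rw [hδ, rpow_inv_le_iff_of_pos (by positivity) (hnonneg x') hq, div_le_iff₀' hK, heq x']
    refine le_add_of_nonneg_left (setIntegral_nonneg (measurableSet_lt measurable_const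
      measurable_snd) fun y hy => mul_nonneg (poissonKernelHalf_nonneg _ _ (le_of_lt hy)) ?_)
    exact rpow_nonneg (poissonExtHalf_nonneg hnonneg _ (le_of_lt hy)) _
  have hPφ_ge : ∀ y ∈ {y : EuclideanSpace ℝ (Fin m) × ℝ | 0 < y.2},
      δ * poissonMass m ≤ poissonExtHalf m φ y.1 y.2 := fun y hy =>
    mul_poissonMass_le_poissonExtHalf hcont.aestronglyMeasurable hφ_ge hbdd y.1 hy
  exact not_integrableOn_poissonKernelHalf_mul_rpow
    (mul_pos (rpow_pos_of_pos (div_pos hc hK) _) poissonMass_pos) (by positivity) hPφ_ge 0 (hint 0)
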